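/- The vector fields V¹ = ∂_θ + cosψ ∂_x + sinψ((1/h)∂_q − (h_x/h)∂_ψ) and V² = ∂_φ − sinψ ∂_x + cosψ((1/h)∂_q − (h_x/h)∂_ψ) on ℝ⁵ with coordinates (θ, φ, x, q, ψ) satisfy: the Lie bracket [V¹, V²] is not in the pointwise span of V¹ and V², at every point where h_{xx}(x) ≠ 0 and h(x) ≠ 0. -/

import Mathlib

open scoped ContDiff

/-- Lie bracket of vector fields on ℝⁿ. -/
noncomputable def vfBracket {n : ℕ} (X Y : (Fin n → ℝ) → (Fin n → ℝ)) :
    (Fin n → ℝ) → (Fin n → ℝ) :=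
  fun x => fderiv ℝ Y x (X x) - fderiv ℝ X x (Y x)

section
variable (h : ℝ → ℝ)

/-- V¹ on ℝ⁵, coordinates (θ,φ,x,q,ψ) = (0,1,2,3,4). -/
noncomputable def V1 (p : Fin 5 → ℝ) : Fin 5 → ℝ :=
  ![1, 0, Real.cos (p 4), Real.sin (p 4) / h (p 2),
    -Real.sin (p 4) * (deriv h (p 2) / h (p 2))]

/-- V² on ℝ⁵. -/
noncomputable def V2 (p : Fin 5 → ℝ) : Fin 5 → ℝ :=
  ![0, 1, -Real.sin (p 4), Real.cos (p 4) / h (p 2),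
    -Real.cos (p 4) * (deriv h (p 2) / h (p 2))]

end

noncomputable def myPr (i : Fin 5) : (Fin 5 → ℝ) →L[ℝ] ℝ := ContinuousLinearMap.proj i

noncomputable def myD1 (s c H H' H'' : ℝ) : Fin 5 → ((Fin 5 → ℝ) →L[ℝ] ℝ) :=
  ![0, 0, (-s) • myPr 4,
    (-(s * H' / H ^ 2)) • myPr 2 + (c / H) • myPr 4,
    (-(s * ((H'' * H - H' * H') / H ^ 2))) • myPr 2 + (-(c * (H' / H))) • myPr 4]

noncomputable def myD2 (s c H H' H'' : ℝ) : Fin 5 → ((Fin 5 → ℝ) →L[ℝ] ℝ) :=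
  ![0, 0, (-c) • myPr 4,
    (-(c * H' / H ^ 2)) • myPr 2 + (-(s / H)) • myPr 4,
    (-(c * ((H'' * H - H' * H') / H ^ 2))) • myPr 2 + (s * (H' / H)) • myPr 4]

lemma myHasFDerivV1 (h : ℝ → ℝ) (hsmooth : ContDiff ℝ (⊤ : ℕ∞) h) (p : Fin 5 → ℝ)
    (hh : h (p 2) ≠ 0) :
    HasFDerivAt (V1 h)
      (ContinuousLinearMap.pi
        (myD1 (Real.sin (p 4)) (Real.cos (p 4)) (h (p 2)) (deriv h (p 2))
          (deriv (deriv h) (p 2)))) p := by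
  have hhd : DifferentiableAt ℝ h (p 2) := (hsmooth.differentiable (by simp)) (p 2)
  have hsm' : ContDiff ℝ ∞ (deriv h) :=
    ((contDiff_infty_iff_deriv).1 (hsmooth.of_le (by simp))).2
  have hhd' : DifferentiableAt ℝ (deriv h) (p 2) :=
    (hsm'.differentiable (by simp)) (p 2)
  have hsin : HasFDerivAt (fun q : Fin 5 → ℝ => Real.sin (q 4))
      (Real.cos (p 4) • myPr 4) p :=
    (Real.hasDerivAt_sin (p 4)).comp_hasFDerivAt (𝕜 := ℝ) (f := fun q : Fin 5 → ℝ => q 4) p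
      (hasFDerivAt_apply 4 p)
  have hcos : HasFDerivAt (fun q : Fin 5 → ℝ => Real.cos (q 4))
      ((-Real.sin (p 4)) • myPr 4) p :=
    (Real.hasDerivAt_cos (p 4)).comp_hasFDerivAt (𝕜 := ℝ) (f := fun q : Fin 5 → ℝ => q 4) p
      (hasFDerivAt_apply 4 p)
  have hinv : HasFDerivAt (fun q : Fin 5 → ℝ => (h (q 2))⁻¹)
      ((-deriv h (p 2) / h (p 2) ^ 2) • myPr 2) p :=
    ((hhd.hasDerivAt.inv hh)).comp_hasFDerivAt (𝕜 := ℝ) (f := fun q : Fin 5 → ℝ => q 2) p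
      (hasFDerivAt_apply 2 p)
  have hg : HasFDerivAt (fun q : Fin 5 → ℝ => deriv h (q 2) / h (q 2))
      (((deriv (deriv h) (p 2) * h (p 2) - deriv h (p 2) * deriv h (p 2)) / h (p 2) ^ 2)
        • myPr 2) p :=
    (hhd'.hasDerivAt.div hhd.hasDerivAt hh).comp_hasFDerivAt (𝕜 := ℝ) (f := fun q : Fin 5 → ℝ => q 2) p
      (hasFDerivAt_apply 2 p)
  refine hasFDerivAt_pi'' fun i => ?_
  rw [ContinuousLinearMap.proj_pi]
  fin_cases i
  · exact hasFDerivAt_const 1 p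
  · exact hasFDerivAt_const 0 p
  · exact hcos
  · show HasFDerivAt (fun x : Fin 5 → ℝ => Real.sin (x 4) / h (x 2))
      ((-(Real.sin (p 4) * deriv h (p 2) / h (p 2) ^ 2)) • myPr 2 +
        (Real.cos (p 4) / h (p 2)) • myPr 4) p
    simp only [div_eq_mul_inv]
    refine (hsin.mul hinv).congr_fderiv ?_
    refine ContinuousLinearMap.ext fun v => ?_
    simp only [ContinuousLinearMap.add_apply, ContinuousLinearMap.smul_apply, smul_eq_mul,
      myPr, ContinuousLinearMap.proj_apply]
    field_simp
    try ring
    try exact Or.inl trivial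
  · show HasFDerivAt
      (fun x : Fin 5 → ℝ => -Real.sin (x 4) * (deriv h (x 2) / h (x 2)))
      ((-(Real.sin (p 4) * ((deriv (deriv h) (p 2) * h (p 2) - deriv h (p 2) * deriv h (p 2))
          / h (p 2) ^ 2))) • myPr 2 +
        (-(Real.cos (p 4) * (deriv h (p 2) / h (p 2)))) • myPr 4) p
    refine (hsin.neg.mul hg).congr_fderiv ?_
    refine ContinuousLinearMap.ext fun v => ?_
    simp only [ContinuousLinearMap.add_apply, ContinuousLinearMap.smul_apply,
      ContinuousLinearMap.neg_apply, smul_eq_mul, myPr, ContinuousLinearMap.proj_apply, Pi.neg_apply]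
    ring

lemma myHasFDerivV2 (h : ℝ → ℝ) (hsmooth : ContDiff ℝ (⊤ : ℕ∞) h) (p : Fin 5 → ℝ)
    (hh : h (p 2) ≠ 0) :
    HasFDerivAt (V2 h)
      (ContinuousLinearMap.pi
        (myD2 (Real.sin (p 4)) (Real.cos (p 4)) (h (p 2)) (deriv h (p 2))
          (deriv (deriv h) (p 2)))) p := by
  have hhd : DifferentiableAt ℝ h (p 2) := (hsmooth.differentiable (by simp)) (p 2)
  have hsm' : ContDiff ℝ ∞ (deriv h) :=
    ((contDiff_infty_iff_deriv).1 (hsmooth.of_le (by simp))).2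
  have hhd' : DifferentiableAt ℝ (deriv h) (p 2) :=
    (hsm'.differentiable (by simp)) (p 2)
  have hsin : HasFDerivAt (fun q : Fin 5 → ℝ => Real.sin (q 4))
      (Real.cos (p 4) • myPr 4) p :=
    (Real.hasDerivAt_sin (p 4)).comp_hasFDerivAt (𝕜 := ℝ) (f := fun q : Fin 5 → ℝ => q 4) p
      (hasFDerivAt_apply 4 p)
  have hcos : HasFDerivAt (fun q : Fin 5 → ℝ => Real.cos (q 4))
      ((-Real.sin (p 4)) • myPr 4) p :=
    (Real.hasDerivAt_cos (p 4)).comp_hasFDerivAt (𝕜 := ℝ) (f := fun q : Fin 5 → ℝ => q 4) p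
      (hasFDerivAt_apply 4 p)
  have hinv : HasFDerivAt (fun q : Fin 5 → ℝ => (h (q 2))⁻¹)
      ((-deriv h (p 2) / h (p 2) ^ 2) • myPr 2) p :=
    ((hhd.hasDerivAt.inv hh)).comp_hasFDerivAt (𝕜 := ℝ) (f := fun q : Fin 5 → ℝ => q 2) p
      (hasFDerivAt_apply 2 p)
  have hg : HasFDerivAt (fun q : Fin 5 → ℝ => deriv h (q 2) / h (q 2))
      (((deriv (deriv h) (p 2) * h (p 2) - deriv h (p 2) * deriv h (p 2)) / h (p 2) ^ 2)
        • myPr 2) p :=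
    (hhd'.hasDerivAt.div hhd.hasDerivAt hh).comp_hasFDerivAt (𝕜 := ℝ) (f := fun q : Fin 5 → ℝ => q 2) p
      (hasFDerivAt_apply 2 p)
  refine hasFDerivAt_pi'' fun i => ?_
  rw [ContinuousLinearMap.proj_pi]
  fin_cases i
  · exact hasFDerivAt_const 0 p
  · exact hasFDerivAt_const 1 p
  · show HasFDerivAt (fun x : Fin 5 → ℝ => -Real.sin (x 4))
      ((-Real.cos (p 4)) • myPr 4) p
    refine (hsin.neg).congr_fderiv ?_
    refine ContinuousLinearMap.ext fun v => ?_
    simp only [ContinuousLinearMap.smul_apply, ContinuousLinearMap.neg_apply, smul_eq_mul,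
      myPr, ContinuousLinearMap.proj_apply]
    ring
  · show HasFDerivAt (fun x : Fin 5 → ℝ => Real.cos (x 4) / h (x 2))
      ((-(Real.cos (p 4) * deriv h (p 2) / h (p 2) ^ 2)) • myPr 2 +
        (-(Real.sin (p 4) / h (p 2))) • myPr 4) p
    simp only [div_eq_mul_inv]
    refine (hcos.mul hinv).congr_fderiv ?_
    refine ContinuousLinearMap.ext fun v => ?_
    simp only [ContinuousLinearMap.add_apply, ContinuousLinearMap.smul_apply, smul_eq_mul,
      myPr, ContinuousLinearMap.proj_apply]
    field_simp
    try ring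
    try exact Or.inl trivial
  · show HasFDerivAt
      (fun x : Fin 5 → ℝ => -Real.cos (x 4) * (deriv h (x 2) / h (x 2)))
      ((-(Real.cos (p 4) * ((deriv (deriv h) (p 2) * h (p 2) - deriv h (p 2) * deriv h (p 2))
          / h (p 2) ^ 2))) • myPr 2 +
        (Real.sin (p 4) * (deriv h (p 2) / h (p 2))) • myPr 4) p
    refine (hcos.neg.mul hg).congr_fderiv ?_
    refine ContinuousLinearMap.ext fun v => ?_
    simp only [ContinuousLinearMap.add_apply, ContinuousLinearMap.smul_apply,
      ContinuousLinearMap.neg_apply, smul_eq_mul, myPr, ContinuousLinearMap.proj_apply, Pi.neg_apply]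
    ring

/-- at every point where `h ≠ 0` and `h'' ≠ 0`, the bracket
[V¹,V²] is not in the pointwise span of V¹ and V². -/
theorem stmt14 (h : ℝ → ℝ) (hsmooth : ContDiff ℝ (⊤ : ℕ∞) h) (p : Fin 5 → ℝ)
    (hh : h (p 2) ≠ 0) (hh2 : deriv (deriv h) (p 2) ≠ 0) :
    ¬ ∃ a b : ℝ, vfBracket (V1 h) (V2 h) p = a • V1 h p + b • V2 h p := by
  rintro ⟨a, b, heq⟩
  have hV1 := myHasFDerivV1 h hsmooth p hh
  have hV2 := myHasFDerivV2 h hsmooth p hh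
  have key : ∀ i : Fin 5, vfBracket (V1 h) (V2 h) p i =
      (myD2 (Real.sin (p 4)) (Real.cos (p 4)) (h (p 2)) (deriv h (p 2))
        (deriv (deriv h) (p 2)) i) (V1 h p) -
      (myD1 (Real.sin (p 4)) (Real.cos (p 4)) (h (p 2)) (deriv h (p 2))
        (deriv (deriv h) (p 2)) i) (V2 h p) := by
    intro i
    simp [vfBracket, hV1.fderiv, hV2.fderiv]
  have h0 := (key 0).symm.trans (congrFun heq 0)
  have h1 := (key 1).symm.trans (congrFun heq 1)
  have h4 := (key 4).symm.trans (congrFun heq 4)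
  simp only [myD1, myD2, Matrix.cons_val_zero, ContinuousLinearMap.zero_apply, sub_zero,
    sub_self, Pi.add_apply, Pi.smul_apply, V1, V2, smul_eq_mul, Matrix.cons_val_one,
    Matrix.head_cons, mul_one, mul_zero, add_zero, zero_add] at h0 h1
  have ha : a = 0 := h0.symm
  have hb : b = 0 := h1.symm
  subst ha hb
  simp only [myD1, myD2, V1, V2, Matrix.cons_val_zero, Matrix.cons_val_one, Matrix.head_cons,
    Matrix.cons_val_two, Matrix.cons_val_three, Matrix.cons_val_four, Matrix.tail_cons,
    ContinuousLinearMap.add_apply, ContinuousLinearMap.smul_apply, myPr,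
    ContinuousLinearMap.proj_apply, smul_eq_mul, zero_smul, zero_add, Pi.add_apply,
    Pi.smul_apply, Pi.zero_apply, add_zero, mul_zero, zero_mul] at h4
  have trig : Real.sin (p 4) ^ 2 + Real.cos (p 4) ^ 2 = 1 := Real.sin_sq_add_cos_sq _
  have h5 : deriv (deriv h) (p 2) * h (p 2) ^ 3 = 0 := by
    field_simp at h4
    linear_combination (-(h (p 2) ^ 2)) * h4 + (-(deriv (deriv h) (p 2) * h (p 2) ^ 3)) * trig
  rcases mul_eq_zero.1 h5 with h6 | h6
  · exact hh2 h6
  · exact pow_ne_zero 3 hh h6
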